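/- For the cycle C_n on n ≥ 3 vertices, B(C_n) = 2 if n ≤ 5 and B(C_n) = 3 if n > 5. -/

import Mathlib

open SimpleGraph

/-- A token may stay in place or move along an edge. -/
def stepRel {V : Type*} (G : SimpleGraph V) (x y : V) : Prop := x = y ∨ G.Adj x y

/-- The sequence of positions in the pursuit game: `(gamePlay ...) n` is the pair
(pursuer positions, evader position) after `n` full rounds; at time `0` the pursuers
have been placed (`binit`) and then the evader placed (`pinit binit`). In each round,
the pursuers move first (via `bmove`, seeing the current state), then the evader moves
(via `pmove`, seeing the pursuers' new positions and his own position). -/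
def gamePlay {V : Type*} {k : ℕ} (binit : Fin k → V) (bmove : (Fin k → V) → V → Fin k → V)
    (pinit : (Fin k → V) → V) (pmove : (Fin k → V) → V → V) : ℕ → (Fin k → V) × V
  | 0 => (binit, pinit binit)
  | n + 1 =>
      let s := gamePlay binit bmove pinit pmove n
      (bmove s.1 s.2, pmove (bmove s.1 s.2) s.2)

/-- `k` bodyguards have a winning strategy on `G`: they can place themselves and move so
that, against every president strategy, after finitely many rounds they occupy the whole
open neighbourhood of the president's vertex at the end of every bodyguard turn. -/
def BodyguardsWin {V : Type*} (G : SimpleGraph V) (k : ℕ) : Prop :=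
  ∃ (binit : Fin k → V) (bmove : (Fin k → V) → V → Fin k → V),
    (∀ bs p i, stepRel G (bs i) (bmove bs p i)) ∧
    ∀ (pinit : (Fin k → V) → V) (pmove : (Fin k → V) → V → V),
      (∀ bs p, stepRel G p (pmove bs p)) →
      ∃ N, ∀ n, N ≤ n →
        ∀ v, G.Adj (gamePlay binit bmove pinit pmove n).2 v →
          ∃ i, (gamePlay binit bmove pinit pmove (n + 1)).1 i = v

/-- The bodyguard number of a finite graph. -/
noncomputable def bodyguardNumber {V : Type*} (G : SimpleGraph V) [Fintype V] : ℕ :=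
  sInf {k | BodyguardsWin G k}

/-- `k` cops have a winning strategy in classic Cops and Robber on `G`: at some point a cop
occupies the same vertex as the robber (either right after a cop move, or at the end of a
round). -/
def CopsWin {V : Type*} (G : SimpleGraph V) (k : ℕ) : Prop :=
  ∃ (cinit : Fin k → V) (cmove : (Fin k → V) → V → Fin k → V),
    (∀ cs r i, stepRel G (cs i) (cmove cs r i)) ∧
    ∀ (rinit : (Fin k → V) → V) (rmove : (Fin k → V) → V → V),
      (∀ cs r, stepRel G r (rmove cs r)) →
      ∃ n i, (gamePlay cinit cmove rinit rmove (n + 1)).1 i =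
                (gamePlay cinit cmove rinit rmove n).2 ∨
             (gamePlay cinit cmove rinit rmove n).1 i =
                (gamePlay cinit cmove rinit rmove n).2

/-- The cop number of a finite graph. -/
noncomputable def copNumber {V : Type*} (G : SimpleGraph V) [Fintype V] : ℕ :=
  sInf {k | CopsWin G k}

/-!
Two bodyguards standing on both sides of the president can follow him forever, each one stepping
as he steps, so two suffice once they can reach such a sandwich from their starting vertices; on a
cycle of length at most five the vertices `1` and `-1` reach one around every vertex.

On a longer cycle the president starts three steps away from bodyguard `0`, where no sandwich can
be formed in one move, and keeps that property: if the two bodyguards, after their move, could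
form a sandwich around each of `p - 1`, `p`, `p + 1`, they would already flank `p`, so they could
have sandwiched `p` with the move they just made.

Three bodyguards win on every cycle. Bodyguard `0` walks up towards `p - 1` and bodyguard `1` walks
down towards `p + 1`; a walker that reaches its target keeps it forever, and while neither has
arrived the sum of their distances drops by two each round. Once one side is held, bodyguard `2`
walks towards the other neighbour of the president from the opposite direction, and the same
distance argument makes one of the two remaining walkers arrive.
-/

open Fin.CommRing

section Game

variable {V : Type*} (G : SimpleGraph V) {k : ℕ}

instance [DecidableEq V] [DecidableRel G.Adj] : DecidableRel (stepRel G) :=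
  fun x y => inferInstanceAs (Decidable (x = y ∨ G.Adj x y))

lemma stepRel_comm {x y : V} : stepRel G x y ↔ stepRel G y x := by
  rw [stepRel, stepRel, eq_comm, G.adj_comm]

def IsMove (bs bs' : Fin k → V) : Prop := ∀ i, stepRel G (bs i) (bs' i)

def Surrounds (bs : Fin k → V) (p : V) : Prop := ∀ v, G.Adj p v → ∃ i, bs i = v

def CanSurround (bs : Fin k → V) (p : V) : Prop := ∃ bs', IsMove G bs bs' ∧ Surrounds G bs' p

theorem bodyguardsWin_of_strategy (binit : Fin k → V) (bmove : (Fin k → V) → V → Fin k → V)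
    (hmove : ∀ bs p, IsMove G bs (bmove bs p))
    (hwin : ∀ (g : ℕ → Fin k → V) (P : ℕ → V), g 0 = binit →
      (∀ t, g (t + 1) = bmove (g t) (P t)) → (∀ t, stepRel G (P t) (P (t + 1))) →
      ∃ N, ∀ t, N ≤ t → Surrounds G (g (t + 1)) (P t)) :
    BodyguardsWin G k :=
  ⟨binit, bmove, hmove, fun pinit pmove hpmove =>
    hwin (fun t => (gamePlay binit bmove pinit pmove t).1)
      (fun t => (gamePlay binit bmove pinit pmove t).2) rfl (fun _ => rfl) fun _ => hpmove _ _⟩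

theorem bodyguardsWin_of_canSurround (binit : Fin k → V) (hinit : ∀ p, CanSurround G binit p)
    (hkeep : ∀ (bs : Fin k → V) p p', Surrounds G bs p → stepRel G p p' → CanSurround G bs p') :
    BodyguardsWin G k := by
  classical
  let bmove (bs : Fin k → V) (p : V) : Fin k → V := if h : CanSurround G bs p then h.choose else bs
  have hsurrounds : ∀ bs p (h : CanSurround G bs p), Surrounds G (bmove bs p) p := by
    intro bs p h
    simp only [bmove, dif_pos h]
    exact h.choose_spec.2
  refine bodyguardsWin_of_strategy G binit bmove (fun bs p => ?_) fun g P hg0 hg hP => ?_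
  · by_cases h : CanSurround G bs p
    · simp only [bmove, dif_pos h]
      exact h.choose_spec.1
    · simp only [bmove, dif_neg h]
      exact fun _ => Or.inl rfl
  · have hcan : ∀ t, CanSurround G (g t) (P t) := by
      intro t
      induction t with
      | zero => exact hg0 ▸ hinit _
      | succ t ih => exact hg t ▸ hkeep _ _ _ (hsurrounds _ _ ih) (hP t)
    exact ⟨0, fun t _ => hg t ▸ hsurrounds _ _ (hcan t)⟩

theorem not_bodyguardsWin_of_evasion (Safe : (Fin k → V) → V → Prop)
    (hsafe : ∀ bs p, Safe bs p → ¬ CanSurround G bs p) (hinit : ∀ bs, ∃ p, Safe bs p)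
    (hkeep : ∀ bs bs' p, Safe bs p → IsMove G bs bs' → ∃ p', stepRel G p p' ∧ Safe bs' p') :
    ¬ BodyguardsWin G k := by
  classical
  rintro ⟨binit, bmove, hmove, hwin⟩
  choose pinit hpinit using hinit
  let pmove (bs : Fin k → V) (p : V) : V :=
    if h : ∃ p', stepRel G p p' ∧ Safe bs p' then h.choose else p
  have hpmove : ∀ bs p, stepRel G p (pmove bs p) := by
    intro bs p
    by_cases h : ∃ p', stepRel G p p' ∧ Safe bs p'
    · simp only [pmove, dif_pos h]
      exact h.choose_spec.1
    · simp only [pmove, dif_neg h]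
      exact Or.inl rfl
  obtain ⟨N, hN⟩ := hwin pinit pmove hpmove
  have hplay : ∀ t, Safe (gamePlay binit bmove pinit pmove t).1
      (gamePlay binit bmove pinit pmove t).2 := by
    intro t
    induction t with
    | zero => exact hpinit binit
    | succ t ih =>
      have h := hkeep _ _ _ ih (hmove _ (gamePlay binit bmove pinit pmove t).2)
      show Safe _ (pmove _ _)
      simp only [pmove, dif_pos h]
      exact h.choose_spec.2
  exact hsafe _ _ (hplay N) ⟨_, hmove _ _, hN N le_rfl⟩

lemma two_le_of_surrounds {bs : Fin k → V} {p u v : V} (h : Surrounds G bs p)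
    (hu : G.Adj p u) (hv : G.Adj p v) (huv : u ≠ v) : 2 ≤ k := by
  obtain ⟨i, rfl⟩ := h u hu
  obtain ⟨j, rfl⟩ := h v hv
  have : i ≠ j := fun hij => huv (hij ▸ rfl)
  omega

theorem not_bodyguardsWin_of_lt_two {p u v : V} (hu : G.Adj p u) (hv : G.Adj p v) (huv : u ≠ v)
    (hk : k < 2) : ¬ BodyguardsWin G k := by
  refine not_bodyguardsWin_of_evasion G (fun _ q => q = p) ?_ (fun _ => ⟨p, rfl⟩)
    fun _ _ q hq _ => ⟨q, Or.inl rfl, hq⟩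
  rintro bs _ rfl ⟨_, _, h⟩
  exact hk.not_ge (two_le_of_surrounds G h hu hv huv)

theorem bodyguardNumber_eq [Fintype V] (hwin : BodyguardsWin G k)
    (hlose : ∀ j < k, ¬ BodyguardsWin G j) : bodyguardNumber G = k :=
  le_antisymm (Nat.sInf_le hwin) (le_csInf ⟨k, hwin⟩ fun j hj => not_lt.1 fun h => hlose j h hj)

end Game

lemma Fin.val_add_le_two_iff {n : ℕ} (d k : Fin n) :
    (d + k).val ≤ 2 ↔ d.val + k.val ≤ 2 ∨ (n ≤ d.val + k.val ∧ d.val + k.val ≤ n + 2) := by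
  rw [Fin.val_add_eq_ite]
  split_ifs <;> omega

lemma exists_of_measure_decreasing {R : ℕ → Prop} (μ : ℕ → ℕ) {t₀ : ℕ}
    (h : ∀ t, t₀ ≤ t → ¬ R t → μ (t + 1) < μ t) : ∃ t, t₀ ≤ t ∧ R t := by
  induction hμ : μ t₀ using Nat.strong_induction_on generalizing t₀ with
  | _ n ih =>
    by_cases hR : R t₀
    · exact ⟨t₀, le_rfl, hR⟩
    · obtain ⟨t, ht, hRt⟩ := ih _ (hμ ▸ h t₀ le_rfl hR) (fun t ht => h t (by omega)) rfl
      exact ⟨t, by omega, hRt⟩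

def forwardDist {n : ℕ} (x y : Fin n) : ℕ := (y - x).val

section Cycle

variable {m : ℕ}

local infix:50 " ⇝ " => stepRel (cycleGraph (m + 3))

lemma Fin.val_le_two_iff (d : Fin (m + 3)) : d.val ≤ 2 ↔ d = 0 ∨ d = 1 ∨ d = 2 := by
  simp only [Fin.ext_iff, Fin.val_zero, Fin.val_one, Fin.val_two]
  omega

lemma Fin.sub_one_ne_add_one (p : Fin (m + 3)) : p - 1 ≠ p + 1 := by
  intro h
  have h2 : (2 : Fin (m + 3)) = 0 := by linear_combination -h
  simp only [Fin.ext_iff, Fin.val_two, Fin.val_zero] at h2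
  omega

lemma cycleGraph_adj_iff {p v : Fin (m + 3)} :
    (cycleGraph (m + 3)).Adj p v ↔ v = p - 1 ∨ v = p + 1 := by
  rw [← mem_neighborSet, cycleGraph_neighborSet (n := m + 1)]
  rfl

lemma stepRel_cycleGraph_iff {x y : Fin (m + 3)} : x ⇝ y ↔ y = x - 1 ∨ y = x ∨ y = x + 1 := by
  rw [stepRel, cycleGraph_adj_iff, eq_comm]
  tauto

lemma stepRel_cycleGraph_add {x y : Fin (m + 3)} (h : x ⇝ y) (c : Fin (m + 3)) :
    x + c ⇝ y + c := by
  rw [stepRel_cycleGraph_iff] at h ⊢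
  rcases h with rfl | rfl | rfl
  · exact Or.inl (by ring)
  · exact Or.inr (Or.inl rfl)
  · exact Or.inr (Or.inr (by ring))

lemma stepRel_cycleGraph_sub {x y : Fin (m + 3)} (h : x ⇝ y) (c : Fin (m + 3)) :
    x - c ⇝ y - c := by
  simpa only [sub_eq_add_neg] using stepRel_cycleGraph_add h (-c)

lemma stepRel_iff_forwardDist_le_two {x y : Fin (m + 3)} : x ⇝ y ↔ forwardDist x (y + 1) ≤ 2 := by
  rw [stepRel_cycleGraph_iff, forwardDist, Fin.val_le_two_iff]
  refine or_congr ?_ (or_congr ?_ ?_) <;> constructor <;> intro h <;> linear_combination h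

lemma stepRel_iff_forwardDist_le_two' {x y : Fin (m + 3)} : x ⇝ y ↔ forwardDist (y - 1) x ≤ 2 := by
  rw [stepRel_comm, stepRel_iff_forwardDist_le_two, forwardDist, forwardDist,
    show x - (y - 1) = x + 1 - y by ring]

lemma forwardDist_pincer_step {x z y y' c : Fin (m + 3)}
    (hx : 3 ≤ forwardDist x (y + 1)) (hz : 3 ≤ forwardDist (y + c - 1) z) (hy : y ⇝ y') :
    forwardDist (x + 1) (y' + 1) + forwardDist (y' + c - 1) (z - 1) + 2 =
      forwardDist x (y + 1) + forwardDist (y + c - 1) z := by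
  unfold forwardDist at *
  have hle : ∀ A : Fin (m + 3), 3 ≤ A.val → 1 ≤ A ∧ 2 ≤ A := fun A hA => by
    simp only [Fin.le_def, Fin.val_one, Fin.val_two]
    omega
  rcases stepRel_cycleGraph_iff.mp hy with rfl | rfl | rfl
  · rw [show y - 1 + 1 - (x + 1) = y + 1 - x - 2 by ring,
      show z - 1 - (y - 1 + c - 1) = z - (y + c - 1) by ring, Fin.sub_val_of_le (hle _ hx).2,
      Fin.val_two]
    omega
  · rw [show y' + 1 - (x + 1) = y' + 1 - x - 1 by ring,
      show z - 1 - (y' + c - 1) = z - (y' + c - 1) - 1 by ring, Fin.sub_val_of_le (hle _ hx).1,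
      Fin.sub_val_of_le (hle _ hz).1, Fin.val_one]
    omega
  · rw [show y + 1 + 1 - (x + 1) = y + 1 - x by ring,
      show z - 1 - (y + 1 + c - 1) = z - (y + c - 1) - 2 by ring, Fin.sub_val_of_le (hle _ hz).2,
      Fin.val_two]
    omega

lemma cycleGraph_surrounds_of_eq {k : ℕ} {bs : Fin k → Fin (m + 3)} {p : Fin (m + 3)}
    {i j : Fin k} (hi : bs i = p - 1) (hj : bs j = p + 1) :
    Surrounds (cycleGraph (m + 3)) bs p := fun v hv => by
  rcases cycleGraph_adj_iff.1 hv with rfl | rfl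
  exacts [⟨i, hi⟩, ⟨j, hj⟩]

theorem cycleGraph_not_bodyguardsWin_of_lt_two {k : ℕ} (hk : k < 2) :
    ¬ BodyguardsWin (cycleGraph (m + 3)) k :=
  not_bodyguardsWin_of_lt_two _ (cycleGraph_adj_iff.2 (Or.inl rfl))
    (cycleGraph_adj_iff.2 (Or.inr rfl)) (Fin.sub_one_ne_add_one 0) hk

section TwoBodyguards

variable {bs : Fin 2 → Fin (m + 3)} {p : Fin (m + 3)}

lemma cycleGraph_surrounds_iff :
    Surrounds (cycleGraph (m + 3)) bs p ↔
      bs 0 = p - 1 ∧ bs 1 = p + 1 ∨ bs 0 = p + 1 ∧ bs 1 = p - 1 := by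
  constructor
  · intro h
    obtain ⟨i, hi⟩ := h (p - 1) (cycleGraph_adj_iff.2 (Or.inl rfl))
    obtain ⟨j, hj⟩ := h (p + 1) (cycleGraph_adj_iff.2 (Or.inr rfl))
    have hij : i ≠ j := fun hij => Fin.sub_one_ne_add_one p (hi ▸ hij ▸ hj)
    fin_cases i <;> fin_cases j <;> simp_all
  · rintro (⟨h0, h1⟩ | ⟨h0, h1⟩)
    exacts [cycleGraph_surrounds_of_eq h0 h1, cycleGraph_surrounds_of_eq h1 h0]

lemma cycleGraph_canSurround_iff :
    CanSurround (cycleGraph (m + 3)) bs p ↔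
      bs 0 ⇝ p - 1 ∧ bs 1 ⇝ p + 1 ∨ bs 0 ⇝ p + 1 ∧ bs 1 ⇝ p - 1 := by
  constructor
  · rintro ⟨bs', hmove, hsurr⟩
    rcases cycleGraph_surrounds_iff.1 hsurr with ⟨h0, h1⟩ | ⟨h0, h1⟩
    · exact Or.inl ⟨h0 ▸ hmove 0, h1 ▸ hmove 1⟩
    · exact Or.inr ⟨h0 ▸ hmove 0, h1 ▸ hmove 1⟩
  · rintro (⟨h0, h1⟩ | ⟨h0, h1⟩)
    · exact ⟨![p - 1, p + 1], Fin.forall_fin_two.2 ⟨h0, h1⟩,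
        cycleGraph_surrounds_iff.2 (Or.inl ⟨rfl, rfl⟩)⟩
    · exact ⟨![p + 1, p - 1], Fin.forall_fin_two.2 ⟨h0, h1⟩,
        cycleGraph_surrounds_iff.2 (Or.inr ⟨rfl, rfl⟩)⟩

lemma cycleGraph_canSurround_of_surrounds {p' : Fin (m + 3)}
    (h : Surrounds (cycleGraph (m + 3)) bs p) (hp : p ⇝ p') :
    CanSurround (cycleGraph (m + 3)) bs p' := by
  rw [cycleGraph_canSurround_iff]
  rcases cycleGraph_surrounds_iff.1 h with ⟨h0, h1⟩ | ⟨h0, h1⟩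
  · exact Or.inl ⟨h0 ▸ stepRel_cycleGraph_sub hp 1, h1 ▸ stepRel_cycleGraph_add hp 1⟩
  · exact Or.inr ⟨h0 ▸ stepRel_cycleGraph_add hp 1, h1 ▸ stepRel_cycleGraph_sub hp 1⟩

theorem cycleGraph_bodyguardsWin_two (hm : m ≤ 2) : BodyguardsWin (cycleGraph (m + 3)) 2 := by
  refine bodyguardsWin_of_canSurround _ ![1, -1] (fun p => ?_)
    fun _ _ _ => cycleGraph_canSurround_of_surrounds
  rw [cycleGraph_canSurround_iff]
  revert p
  interval_cases m <;> decide

lemma cycleGraph_surrounds_of_canSurround_three (hm : 3 ≤ m)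
    (hprev : CanSurround (cycleGraph (m + 3)) bs (p - 1))
    (hcur : CanSurround (cycleGraph (m + 3)) bs p)
    (hnext : CanSurround (cycleGraph (m + 3)) bs (p + 1)) :
    Surrounds (cycleGraph (m + 3)) bs p := by
  -- Pass to the offsets `bs i - p`: the hypotheses bound them by constants, and on a cycle of
  -- length at least six only the offsets `-1, 1` (in some order) satisfy all three.
  have hreach : ∀ x c, x ⇝ p + c ↔ (x - p + (1 - c)).val ≤ 2 := fun x c => by
    rw [stepRel_iff_forwardDist_le_two', forwardDist,
      show x - (p + c - 1) = x - p + (1 - c) by ring]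
  have hoffset : ∀ x c, x = p + c ↔ (x - p).val = c.val := fun x c => by
    rw [← Fin.ext_iff, sub_eq_iff_eq_add']
  rw [cycleGraph_canSurround_iff] at hprev hcur hnext
  rw [show p - 1 - 1 = p + -2 by ring, show p - 1 + 1 = p + 0 by ring] at hprev
  rw [show p - 1 = p + -1 by ring] at hcur
  rw [show p + 1 - 1 = p + 0 by ring, show p + 1 + 1 = p + 2 by ring] at hnext
  simp only [hreach] at hprev hcur hnext
  norm_num at hprev hcur hnext
  have h3 : ((3 : Fin (m + 3)) : ℕ) = 3 := show 3 % (m + 3) = 3 from Nat.mod_eq_of_lt (by omega)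
  simp only [Fin.val_add_le_two_iff, h3, Fin.val_two, Fin.val_one, Fin.coe_neg_one]
    at hprev hcur hnext
  rw [cycleGraph_surrounds_iff, show p - 1 = p + -1 by ring, hoffset, hoffset, hoffset, hoffset,
    Fin.coe_neg_one, Fin.val_one]
  omega

lemma cycleGraph_not_canSurround_add_three (hm : 3 ≤ m) (bs : Fin 2 → Fin (m + 3)) :
    ¬ CanSurround (cycleGraph (m + 3)) bs (bs 0 + 3) := by
  rw [cycleGraph_canSurround_iff]
  rintro (⟨h, -⟩ | ⟨h, -⟩) <;> rw [stepRel_iff_forwardDist_le_two, forwardDist] at h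
  · rw [show bs 0 + 3 - 1 + 1 - bs 0 = 3 by ring,
      show ((3 : Fin (m + 3)) : ℕ) = 3 % (m + 3) from rfl, Nat.mod_eq_of_lt (by omega)] at h
    omega
  · rw [show bs 0 + 3 + 1 + 1 - bs 0 = 5 by ring,
      show ((5 : Fin (m + 3)) : ℕ) = 5 % (m + 3) from rfl, Nat.mod_eq_of_lt (by omega)] at h
    omega

theorem cycleGraph_not_bodyguardsWin_two (hm : 3 ≤ m) :
    ¬ BodyguardsWin (cycleGraph (m + 3)) 2 := by
  refine not_bodyguardsWin_of_evasion _ (fun bs p => ¬ CanSurround _ bs p) (fun _ _ => id)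
    (fun bs => ⟨_, cycleGraph_not_canSurround_add_three hm bs⟩) fun bs bs' p hsafe hmove => ?_
  by_contra! h
  exact hsafe ⟨bs', hmove, cycleGraph_surrounds_of_canSurround_three hm
    (h _ (stepRel_cycleGraph_iff.2 (Or.inl rfl))) (h _ (Or.inl rfl))
    (h _ (stepRel_cycleGraph_iff.2 (Or.inr (Or.inr rfl))))⟩

end TwoBodyguards

section ThreeBodyguards

def chaseUp (x y : Fin (m + 3)) : Fin (m + 3) := if x ⇝ y then y else x + 1

def chaseDown (x y : Fin (m + 3)) : Fin (m + 3) := if x ⇝ y then y else x - 1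

lemma stepRel_chaseUp (x y : Fin (m + 3)) : x ⇝ chaseUp x y := by
  unfold chaseUp
  split_ifs with h
  exacts [h, stepRel_cycleGraph_iff.2 (Or.inr (Or.inr rfl))]

lemma stepRel_chaseDown (x y : Fin (m + 3)) : x ⇝ chaseDown x y := by
  unfold chaseDown
  split_ifs with h
  exacts [h, stepRel_cycleGraph_iff.2 (Or.inl rfl)]

lemma chaseUp_of_stepRel {x y : Fin (m + 3)} (h : x ⇝ y) : chaseUp x y = y := if_pos h

lemma chaseDown_of_stepRel {x y : Fin (m + 3)} (h : x ⇝ y) : chaseDown x y = y := if_pos h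

lemma exists_stepRel_of_pincer (x z y w : ℕ → Fin (m + 3)) (c : Fin (m + 3)) (t₀ : ℕ)
    (hw : ∀ t, w t = y t + c) (hy : ∀ t, y t ⇝ y (t + 1))
    (hx : ∀ t, t₀ ≤ t → x (t + 1) = chaseUp (x t) (y t))
    (hz : ∀ t, t₀ ≤ t → z (t + 1) = chaseDown (z t) (w t)) :
    ∃ t, t₀ ≤ t ∧ (x t ⇝ y t ∨ z t ⇝ w t) := by
  obtain rfl : w = fun t => y t + c := funext hw
  refine exists_of_measure_decreasing
    (fun t => forwardDist (x t) (y t + 1) + forwardDist (y t + c - 1) (z t)) fun t ht hnot => ?_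
  rw [not_or, stepRel_iff_forwardDist_le_two, stepRel_iff_forwardDist_le_two', not_le,
    not_le] at hnot
  have hstep := forwardDist_pincer_step hnot.1 hnot.2 (hy t)
  rw [hx t ht, hz t ht, chaseUp, if_neg (stepRel_iff_forwardDist_le_two.not.2 hnot.1.not_ge),
    chaseDown, if_neg (stepRel_iff_forwardDist_le_two'.not.2 hnot.2.not_ge)]
  omega

def threeGuardMove (bs : Fin 3 → Fin (m + 3)) (p : Fin (m + 3)) : Fin 3 → Fin (m + 3) :=
  ![chaseUp (bs 0) (p - 1), chaseDown (bs 1) (p + 1),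
    if bs 0 ⇝ p - 1 then chaseUp (bs 2) (p + 1) else chaseDown (bs 2) (p - 1)]

lemma isMove_threeGuardMove (bs : Fin 3 → Fin (m + 3)) (p : Fin (m + 3)) :
    IsMove (cycleGraph (m + 3)) bs (threeGuardMove bs p) := by
  intro i
  fin_cases i
  · exact stepRel_chaseUp _ _
  · exact stepRel_chaseDown _ _
  · dsimp [threeGuardMove]
    split_ifs
    exacts [stepRel_chaseUp _ _, stepRel_chaseDown _ _]

def Guarded (bs : Fin 3 → Fin (m + 3)) (p : Fin (m + 3)) : Prop :=
  bs 0 ⇝ p - 1 ∧ (bs 1 ⇝ p + 1 ∨ bs 2 ⇝ p + 1) ∨ bs 1 ⇝ p + 1 ∧ bs 2 ⇝ p - 1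

variable {bs : Fin 3 → Fin (m + 3)} {p p' : Fin (m + 3)}

lemma threeGuardMove_zero (h : bs 0 ⇝ p - 1) : threeGuardMove bs p 0 = p - 1 :=
  chaseUp_of_stepRel h

lemma threeGuardMove_one (h : bs 1 ⇝ p + 1) : threeGuardMove bs p 1 = p + 1 :=
  chaseDown_of_stepRel h

lemma threeGuardMove_two_of_up (h0 : bs 0 ⇝ p - 1) (h : bs 2 ⇝ p + 1) :
    threeGuardMove bs p 2 = p + 1 := by
  simp only [threeGuardMove, Matrix.cons_val, if_pos h0, chaseUp_of_stepRel h]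

lemma threeGuardMove_two_of_down (h0 : ¬ bs 0 ⇝ p - 1) (h : bs 2 ⇝ p - 1) :
    threeGuardMove bs p 2 = p - 1 := by
  simp only [threeGuardMove, Matrix.cons_val, if_neg h0, chaseDown_of_stepRel h]

lemma Guarded.surrounds (h : Guarded bs p) :
    Surrounds (cycleGraph (m + 3)) (threeGuardMove bs p) p := by
  rcases h with ⟨h0, h1 | h2⟩ | ⟨h1, h2⟩
  · exact cycleGraph_surrounds_of_eq (threeGuardMove_zero h0) (threeGuardMove_one h1)
  · exact cycleGraph_surrounds_of_eq (threeGuardMove_zero h0) (threeGuardMove_two_of_up h0 h2)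
  · by_cases h0 : bs 0 ⇝ p - 1
    · exact cycleGraph_surrounds_of_eq (threeGuardMove_zero h0) (threeGuardMove_one h1)
    · exact cycleGraph_surrounds_of_eq (threeGuardMove_two_of_down h0 h2) (threeGuardMove_one h1)

lemma Guarded.threeGuardMove (h : Guarded bs p) (hp : p ⇝ p') :
    Guarded (threeGuardMove bs p) p' := by
  have hdown : ∀ x, x = p - 1 → x ⇝ p' - 1 := fun x hx => hx ▸ stepRel_cycleGraph_sub hp 1
  have hup : ∀ x, x = p + 1 → x ⇝ p' + 1 := fun x hx => hx ▸ stepRel_cycleGraph_add hp 1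
  rcases h with ⟨h0, h1 | h2⟩ | ⟨h1, h2⟩
  · exact Or.inl ⟨hdown _ (threeGuardMove_zero h0), Or.inl (hup _ (threeGuardMove_one h1))⟩
  · exact Or.inl ⟨hdown _ (threeGuardMove_zero h0),
      Or.inr (hup _ (threeGuardMove_two_of_up h0 h2))⟩
  · by_cases h0 : bs 0 ⇝ p - 1
    · exact Or.inl ⟨hdown _ (threeGuardMove_zero h0), Or.inl (hup _ (threeGuardMove_one h1))⟩
    · exact Or.inr ⟨hup _ (threeGuardMove_one h1), hdown _ (threeGuardMove_two_of_down h0 h2)⟩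

lemma exists_guarded (g : ℕ → Fin 3 → Fin (m + 3)) (P : ℕ → Fin (m + 3))
    (hg : ∀ t, g (t + 1) = threeGuardMove (g t) (P t)) (hP : ∀ t, P t ⇝ P (t + 1)) :
    ∃ t, Guarded (g t) (P t) := by
  have hdown : ∀ t, P t - 1 ⇝ P (t + 1) - 1 := fun t => stepRel_cycleGraph_sub (hP t) 1
  have hup : ∀ t, P t + 1 ⇝ P (t + 1) + 1 := fun t => stepRel_cycleGraph_add (hP t) 1
  have hg0 : ∀ t, g (t + 1) 0 = chaseUp (g t 0) (P t - 1) := fun t => by rw [hg]; rfl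
  have hg1 : ∀ t, g (t + 1) 1 = chaseDown (g t 1) (P t + 1) := fun t => by rw [hg]; rfl
  obtain ⟨t₀, -, h₀₁⟩ := exists_stepRel_of_pincer (fun t => g t 0) (fun t => g t 1)
    (fun t => P t - 1) (fun t => P t + 1) 2 0 (fun t => by ring) hdown (fun t _ => hg0 t)
    fun t _ => hg1 t
  rcases h₀₁ with h0 | h1
  · have hR0 : ∀ t, t₀ ≤ t → g t 0 ⇝ P t - 1 := fun t ht =>
      Nat.le_induction h0 (fun t _ ih => by rw [hg0, chaseUp_of_stepRel ih]; exact hdown t) t ht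
    obtain ⟨t, ht, h⟩ := exists_stepRel_of_pincer (fun t => g t 2) (fun t => g t 1)
      (fun t => P t + 1) (fun t => P t + 1) 0 t₀ (fun t => (add_zero _).symm) hup
      (fun t ht => by simp only [hg, threeGuardMove, Matrix.cons_val, if_pos (hR0 t ht)])
      fun t _ => hg1 t
    exact ⟨t, Or.inl ⟨hR0 t ht, h.symm⟩⟩
  · have hR1 : ∀ t, t₀ ≤ t → g t 1 ⇝ P t + 1 := fun t ht =>
      Nat.le_induction h1 (fun t _ ih => by rw [hg1, chaseDown_of_stepRel ih]; exact hup t) t ht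
    by_cases hR0 : ∃ t, t₀ ≤ t ∧ g t 0 ⇝ P t - 1
    · obtain ⟨t, ht, h0⟩ := hR0
      exact ⟨t, Or.inl ⟨h0, Or.inl (hR1 t ht)⟩⟩
    simp only [not_exists, not_and] at hR0
    obtain ⟨t, ht, h⟩ := exists_stepRel_of_pincer (fun t => g t 0) (fun t => g t 2)
      (fun t => P t - 1) (fun t => P t - 1) 0 t₀ (fun t => (add_zero _).symm) hdown
      (fun t _ => hg0 t)
      fun t ht => by simp only [hg, threeGuardMove, Matrix.cons_val, if_neg (hR0 t ht)]
    exact ⟨t, Or.inr ⟨hR1 t ht, h.resolve_left (hR0 t ht)⟩⟩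

theorem cycleGraph_bodyguardsWin_three : BodyguardsWin (cycleGraph (m + 3)) 3 := by
  refine bodyguardsWin_of_strategy _ (fun _ => 0) threeGuardMove isMove_threeGuardMove
    fun g P _ hg hP => ?_
  obtain ⟨T, hT⟩ := exists_guarded g P hg hP
  have hguarded : ∀ t, T ≤ t → Guarded (g t) (P t) := fun t ht =>
    Nat.le_induction hT (fun t _ ih => hg t ▸ ih.threeGuardMove (hP t)) t ht
  exact ⟨T, fun t ht => hg t ▸ (hguarded t ht).surrounds⟩

end ThreeBodyguards

end Cycle

/-- For the cycle `C_n` on `n ≥ 3` vertices, `B(C_n) = 2` if `n ≤ 5` and `B(C_n) = 3`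
if `n > 5`. -/
theorem bodyguardNumber_cycleGraph (n : ℕ) (hn : 3 ≤ n) :
    bodyguardNumber (SimpleGraph.cycleGraph n) = if n ≤ 5 then 2 else 3 := by
  obtain ⟨m, rfl⟩ : ∃ m, n = m + 3 := ⟨n - 3, by omega⟩
  split_ifs with hsmall
  · exact bodyguardNumber_eq _ (cycleGraph_bodyguardsWin_two (by omega)) fun j hj =>
      cycleGraph_not_bodyguardsWin_of_lt_two hj
  · refine bodyguardNumber_eq _ cycleGraph_bodyguardsWin_three fun j hj => ?_
    rcases Nat.lt_or_ge j 2 with hj2 | hj2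
    · exact cycleGraph_not_bodyguardsWin_of_lt_two hj2
    · obtain rfl : j = 2 := by omega
      exact cycleGraph_not_bodyguardsWin_two (by omega)
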